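/- Suppose T : [0, L] → ℝ satisfies T'(x) = -(γ/(c f))(T(x) - T_ext) on [0, L] and p : [0, L] → ℝ satisfies p(x) p'(x) = -(λ R /(2 A² d)) f |f| T(x), with constants γ, c, f, λ, R, A, d > 0. Then p(L)² - p(0)² = -(λ R/(A² d)) f |f| (T_ext L + (c f/γ)(T(0) - T(L))). -/

import Mathlib

/-!
Integrating the thermal ODE once gives an explicit antiderivative of the temperature,
`∫ T = T_ext x - T / k` with `k = γ / (c f)`, while the momentum balance says that `p²` has
derivative `2 p p' = -(λ R / (A² d)) f |f| T`. Hence `p²` and a multiple of that antiderivative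
have the same derivative on `[0, L]`, so their increments over `[0, L]` agree.
-/

open Set

theorem sub_eq_sub_of_hasDerivAt_eq {E : Type*} [NormedAddCommGroup E] [NormedSpace ℝ E]
    {F G F' : ℝ → E} {a b : ℝ} (hab : a ≤ b)
    (hF : ∀ x ∈ Icc a b, HasDerivAt F (F' x) x) (hG : ∀ x ∈ Icc a b, HasDerivAt G (F' x) x) :
    F b - F a = G b - G a := by
  have hderiv : ∀ x ∈ Icc a b, HasDerivAt (F - G) 0 x := fun x hx => by
    simpa using (hF x hx).sub (hG x hx)
  have hconst := constant_of_has_deriv_right_zero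
    (fun x hx => (hderiv x hx).continuousAt.continuousWithinAt)
    (fun x hx => (hderiv x (Ico_subset_Icc_self hx)).hasDerivWithinAt) b ⟨hab, le_rfl⟩
  rwa [Pi.sub_apply, Pi.sub_apply, sub_eq_sub_iff_sub_eq_sub] at hconst

theorem hasDerivAt_antiderivative_of_relaxation {T : ℝ → ℝ} {T' k Text x : ℝ} (hk : k ≠ 0)
    (hT : HasDerivAt T T' x) (hode : T' = -k * (T x - Text)) :
    HasDerivAt (fun y => Text * y - T y / k) (T x) x := by
  refine (((hasDerivAt_id x).const_mul Text).sub (hT.div_const k)).congr_deriv ?_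
  rw [hode]
  field_simp
  ring

theorem hasDerivAt_sq_of_mul_deriv_eq {p : ℝ → ℝ} {p' v x : ℝ} (hp : HasDerivAt p p' x)
    (h : p x * p' = v) : HasDerivAt (fun y => p y ^ 2) (2 * v) x := by
  refine (hp.pow 2).congr_deriv ?_
  rw [← h]
  ring

theorem steam_pressure_drop_integrated_general
    (γ c f lam R A d Text L : ℝ)
    (hγ : 0 < γ) (hc : 0 < c) (hf : 0 < f)
    (hL : 0 ≤ L)
    (T p T' p' : ℝ → ℝ)
    (hT : ∀ x ∈ Set.Icc (0 : ℝ) L, HasDerivAt T (T' x) x)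
    (hTode : ∀ x ∈ Set.Icc (0 : ℝ) L, T' x = -(γ / (c * f)) * (T x - Text))
    (hp : ∀ x ∈ Set.Icc (0 : ℝ) L, HasDerivAt p (p' x) x)
    (hpode : ∀ x ∈ Set.Icc (0 : ℝ) L,
      p x * p' x = -(lam * R / (2 * A ^ 2 * d)) * f * |f| * T x) :
    p L ^ 2 - p 0 ^ 2 =
      -(lam * R / (A ^ 2 * d)) * f * |f| *
        (Text * L + (c * f / γ) * (T 0 - T L)) := by
  set C := lam * R / (2 * A ^ 2 * d) * f * |f|
  have hk : γ / (c * f) ≠ 0 := by positivity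
  have hsq : ∀ x ∈ Icc 0 L, HasDerivAt (fun y => p y ^ 2) (2 * (-C * T x)) x := fun x hx =>
    hasDerivAt_sq_of_mul_deriv_eq (hp x hx) (by rw [hpode x hx]; ring)
  have hflow : ∀ x ∈ Icc 0 L,
      HasDerivAt (fun y => -2 * C * (Text * y - T y / (γ / (c * f)))) (2 * (-C * T x)) x :=
    fun x hx => by
      refine ((hasDerivAt_antiderivative_of_relaxation hk (hT x hx) (hTode x hx)).const_mul
        (-2 * C)).congr_deriv ?_
      ring
  rw [sub_eq_sub_of_hasDerivAt_eq hL hsq hflow]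
  simp only [C, div_div_eq_mul_div]
  ring

theorem steam_pressure_drop_integrated
    (γ c f lam R A d Text L : ℝ)
    (hγ : 0 < γ) (hc : 0 < c) (hf : 0 < f) (hlam : 0 < lam) (hR : 0 < R)
    (hA : 0 < A) (hd : 0 < d) (hL : 0 ≤ L)
    (T p T' p' : ℝ → ℝ)
    (hT : ∀ x ∈ Set.Icc (0 : ℝ) L, HasDerivAt T (T' x) x)
    (hTode : ∀ x ∈ Set.Icc (0 : ℝ) L, T' x = -(γ / (c * f)) * (T x - Text))
    (hp : ∀ x ∈ Set.Icc (0 : ℝ) L, HasDerivAt p (p' x) x)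
    (hpode : ∀ x ∈ Set.Icc (0 : ℝ) L,
      p x * p' x = -(lam * R / (2 * A ^ 2 * d)) * f * |f| * T x) :
    p L ^ 2 - p 0 ^ 2 =
      -(lam * R / (A ^ 2 * d)) * f * |f| *
        (Text * L + (c * f / γ) * (T 0 - T L)) :=
  steam_pressure_drop_integrated_general γ c f lam R A d Text L hγ hc hf hL T p T' p' hT hTode hp
    hpode
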